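/- arXiv:1707.04981 — 2 statements merged into one kernel-verified Lean document; each statement's English description precedes it below -/
import Mathlib

section
/- In the binomial model, if S = (0,y] ∩ 𝕏 is an equilibrium for some y ∈ S ∩ (0,K), then y > L·K, where L := (1 − α₁)/(u − α₁) and α₁ := E^1[1/(1+βξ)], with ξ the first hitting time of 0 by the random walk Y on ℤ with i.i.d. steps +1 with probability p and −1 with probability 1−p, E^n expectation for Y_0 = n, and the convention 1/(1+β·∞) := 0. -/
open MeasureTheory ProbabilityTheory Set Filter Topology
open scoped ENNReal ENat

noncomputable section

/-- The σ-algebra generated by the first `n+1` coordinates of the path space: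
the natural filtration of the coordinate process at time `n`. -/
def pathSigma (𝕏 : Type*) [m : MeasurableSpace 𝕏] (n : ℕ) : MeasurableSpace (ℕ → 𝕏) :=
  ⨆ i ∈ Finset.range (n + 1), MeasurableSpace.comap (fun ω : ℕ → 𝕏 => ω i) m

/-- `Pr` is the family of laws of the time-homogeneous Markov chain with one-step
transition kernel `Q`: under `Pr x` the chain starts at `x`, and the Markov property
`Pr^x(X_{n+1} ∈ A | 𝓕_n) = Q(X_n, A)` holds. -/
structure IsMarkovChainLaw {𝕏 : Type*} [MeasurableSpace 𝕏]
    (Pr : Kernel 𝕏 (ℕ → 𝕏)) (Q : Kernel 𝕏 𝕏) : Prop where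
  start : ∀ x : 𝕏, Pr x {ω | ω 0 = x} = 1
  markov : ∀ (x : 𝕏) (n : ℕ) (B : Set (ℕ → 𝕏)), MeasurableSet[pathSigma 𝕏 n] B →
    ∀ A : Set 𝕏, MeasurableSet A →
      Pr x (B ∩ {ω | ω (n + 1) ∈ A}) = ∫⁻ ω in B, Q (ω n) A ∂(Pr x)

/-- The first hitting time `ρ(x,S) = inf {t ≥ 1 : X_t ∈ S}` along the path `ω`
(equal to `⊤` if `S` is never reached at a time `≥ 1`). -/
def hitTime {𝕏 : Type*} (S : Set 𝕏) (ω : ℕ → 𝕏) : ℕ∞ :=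
  sInf {n : ℕ∞ | ∃ t : ℕ, n = (t : ℕ∞) ∧ 1 ≤ t ∧ ω t ∈ S}

/-- The discounted payoff `δ(ρ(x,S)) f(X_{ρ(x,S)})` collected along the path `ω`,
with the convention that it vanishes when `S` is never hit. -/
def stopPayoff {𝕏 : Type*} (δ : ℕ → ℝ) (f : 𝕏 → ℝ) (S : Set 𝕏) (ω : ℕ → 𝕏) : ℝ :=
  if hitTime S ω = ⊤ then 0
  else δ (hitTime S ω).toNat * f (ω (hitTime S ω).toNat)

/-- The objective value `J(x, ρ(x,S)) = 𝔼^x[δ(ρ(x,S)) f(X_{ρ(x,S)})]`. -/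
def valJ {𝕏 : Type*} [MeasurableSpace 𝕏] (Pr : Kernel 𝕏 (ℕ → 𝕏)) (δ : ℕ → ℝ) (f : 𝕏 → ℝ)
    (S : Set 𝕏) (x : 𝕏) : ℝ :=
  ∫ ω, stopPayoff δ f S ω ∂(Pr x)

/-- The operator `Θ(S) = {x ∈ 𝕏 : f(x) ≥ J(x, ρ(x,S))}`. -/
def Θ {𝕏 : Type*} [MeasurableSpace 𝕏] (Pr : Kernel 𝕏 (ℕ → 𝕏)) (δ : ℕ → ℝ) (f : 𝕏 → ℝ)
    (S : Set 𝕏) : Set 𝕏 :=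
  {x | valJ Pr δ f S x ≤ f x}

/-- A Borel set `S ⊆ 𝕏` is an equilibrium if `Θ(S) = S`. -/
def IsEquilibrium {𝕏 : Type*} [MeasurableSpace 𝕏] (Pr : Kernel 𝕏 (ℕ → 𝕏)) (δ : ℕ → ℝ)
    (f : 𝕏 → ℝ) (S : Set 𝕏) : Prop :=
  MeasurableSet S ∧ Θ Pr δ f S = S

/-- The value `V(x,S) = max (f x) (J(x, ρ(x,S)))` associated with an equilibrium `S`. -/
def valV {𝕏 : Type*} [MeasurableSpace 𝕏] (Pr : Kernel 𝕏 (ℕ → 𝕏)) (δ : ℕ → ℝ) (f : 𝕏 → ℝ)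
    (S : Set 𝕏) (x : 𝕏) : ℝ :=
  max (f x) (valJ Pr δ f S x)

/-- The state space `𝕏 = {uⁱ : i ∈ ℤ}` of the binomial model. -/
def binGrid (u : ℝ) : Set ℝ := {x | ∃ i : ℤ, x = u ^ i}

/-- The hyperbolic discount function `δ(t) = 1 / (1 + βt)`. -/
def binDisc (β : ℝ) (t : ℕ) : ℝ := 1 / (1 + β * t)

/-- The payoff function `f(x) = max (K − x) 0`. -/
def binPay (K : ℝ) (x : ℝ) : ℝ := max (K - x) 0

/-- The operator `Θ(S) = {x ∈ 𝕏 : f(x) ≥ J(x, ρ(x,S))}` of the binomial model. -/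
def ΘBin (Pr : Kernel ℝ (ℕ → ℝ)) (u β K : ℝ) (S : Set ℝ) : Set ℝ :=
  {x | x ∈ binGrid u ∧ valJ Pr (binDisc β) (binPay K) S x ≤ binPay K x}

/-- The first hitting time `ξ = inf {t ≥ 0 : Y_t = 0}` of `0` by the random walk path `ω`. -/
def walkHit (ω : ℕ → ℤ) : ℕ∞ :=
  sInf {n : ℕ∞ | ∃ t : ℕ, n = (t : ℕ∞) ∧ ω t = 0}

/-- The discounted quantity `1 / (1 + β(ξ + s))`, equal to `0` on `{ξ = ∞}`. -/
def walkDisc (β : ℝ) (s : ℕ) (ω : ℕ → ℤ) : ℝ :=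
  if walkHit ω = ⊤ then 0 else 1 / (1 + β * ((walkHit ω).toNat + s))

/-- `α_n = E^n[1 / (1 + βξ)]`. -/
def alphaWalk (PrY : Kernel ℤ (ℕ → ℤ)) (β : ℝ) (n : ℤ) : ℝ :=
  ∫ ω, walkDisc β 0 ω ∂(PrY n)

/-- `α' = E^1[1 / (1 + β(ξ + 1))]`. -/
def alphaWalk' (PrY : Kernel ℤ (ℕ → ℤ)) (β : ℝ) : ℝ :=
  ∫ ω, walkDisc β 1 ω ∂(PrY 1)


/-!
Since `S = (0,y] ∩ 𝕏` is an equilibrium and `uy ∉ S`, stopping at `uy` is strictly worse than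
waiting for `S`: `f(uy) < J(uy, ρ(uy,S))`. Started at `uy`, the chain has the law of `y·u^Y` for
the walk `Y` started at `1`, because both laws satisfy the Markov property for the same two-point
kernel. A walk with steps `±1` enters `(-∞,0]` exactly when it first hits `0`, so `X` first enters
`S` at the state `y`, at time `ξ`; hence `J(uy, ρ(uy,S)) = (K - y) α₁`. Finally
`K - uy ≤ f(uy) < (K - y) α₁` with `α₁ ≤ 1 < u` rearranges to `y > L K`.
-/

section HittingTimes

variable {𝕏 : Type*}

lemma sInf_natCast_setOf_eq_iInf (P : ℕ → Prop) [DecidablePred P] :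
    sInf {n : ℕ∞ | ∃ t : ℕ, n = t ∧ P t} = ⨅ t : ℕ, if P t then (t : ℕ∞) else ⊤ := by
  refine le_antisymm (le_iInf fun t => ?_) (le_sInf ?_)
  · split_ifs with ht
    exacts [sInf_le ⟨t, rfl, ht⟩, le_top]
  · rintro _ ⟨t, rfl, ht⟩
    exact iInf_le_of_le t (by simp [ht])

lemma measurable_hitTime [MeasurableSpace 𝕏] {S : Set 𝕏} (hS : MeasurableSet S) :
    Measurable (hitTime S) := by
  classical
  have : BorelSpace ℕ∞ := ⟨borel_eq_top_of_countable.symm⟩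
  have hrepr : hitTime S = fun ω => ⨅ t : ℕ, if 1 ≤ t ∧ ω t ∈ S then (t : ℕ∞) else ⊤ :=
    funext fun ω => sInf_natCast_setOf_eq_iInf _
  rw [hrepr]
  exact Measurable.iInf fun t =>
    Measurable.ite ((MeasurableSet.const _).inter (measurable_pi_apply t hS))
      measurable_const measurable_const

lemma measurable_stopPayoff [MeasurableSpace 𝕏] (δ : ℕ → ℝ) {f : 𝕏 → ℝ} (hf : Measurable f)
    {S : Set 𝕏} (hS : MeasurableSet S) : Measurable (stopPayoff δ f S) := by
  let F : (ℕ → 𝕏) × ℕ∞ → ℝ := fun q => if q.2 = ⊤ then 0 else δ q.2.toNat * f (q.1 q.2.toNat)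
  have hF : Measurable F := measurable_from_prod_countable_left fun n => by
    by_cases hn : n = ⊤
    · simp only [F, hn, if_true, measurable_const]
    · simp only [F, hn, if_false]
      exact measurable_const.mul (hf.comp (measurable_pi_apply _))
  exact hF.comp (measurable_id.prodMk (measurable_hitTime hS))

lemma exists_le_eq_zero_of_sub_one_le {ω : ℕ → ℤ} (h0 : 0 < ω 0)
    (hstep : ∀ t, ω t - 1 ≤ ω (t + 1)) {t : ℕ} (ht : ω t ≤ 0) : ∃ s ≤ t, ω s = 0 := by
  induction t with
  | zero => omega
  | succ k ih =>
    by_cases hk : ω k ≤ 0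
    · obtain ⟨s, hs, hzero⟩ := ih hk
      exact ⟨s, hs.trans k.le_succ, hzero⟩
    · exact ⟨k + 1, le_rfl, by linarith [hstep k]⟩

lemma hitTime_Iic_zero_eq_walkHit {ω : ℕ → ℤ} (h0 : 0 < ω 0)
    (hstep : ∀ t, ω t - 1 ≤ ω (t + 1)) : hitTime (Iic 0) ω = walkHit ω := by
  refine le_antisymm (le_sInf ?_) (le_sInf ?_)
  · rintro _ ⟨t, rfl, ht⟩
    have ht1 : 1 ≤ t := Nat.one_le_iff_ne_zero.mpr fun h => by subst h; omega
    exact sInf_le ⟨t, rfl, ht1, ht.le⟩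
  · rintro _ ⟨t, rfl, -, ht⟩
    obtain ⟨s, hst, hs⟩ := exists_le_eq_zero_of_sub_one_le h0 hstep ht
    have hhit : walkHit ω ≤ s := sInf_le ⟨s, rfl, hs⟩
    exact hhit.trans (by exact_mod_cast hst)

lemma apply_walkHit_toNat_eq_zero {ω : ℕ → ℤ} (h : walkHit ω ≠ ⊤) : ω (walkHit ω).toNat = 0 := by
  have hne : {n : ℕ∞ | ∃ t : ℕ, n = t ∧ ω t = 0}.Nonempty := by
    by_contra hemp
    exact h (by rw [walkHit, Set.not_nonempty_iff_eq_empty.mp hemp, sInf_empty])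
  obtain ⟨t, ht, hzero⟩ := csInf_mem hne
  rw [walkHit, ht, ENat.toNat_natCast]
  exact hzero

lemma stopPayoff_comp_walk {δ : ℕ → ℝ} {f : 𝕏 → ℝ} {S : Set 𝕏} {ψ : ℤ → 𝕏}
    (hS : ψ ⁻¹' S = Iic 0) {ω : ℕ → ℤ} (h0 : 0 < ω 0) (hstep : ∀ t, ω t - 1 ≤ ω (t + 1)) :
    stopPayoff δ f S (fun t => ψ (ω t))
      = if walkHit ω = ⊤ then 0 else δ (walkHit ω).toNat * f (ψ 0) := by
  have hhit : hitTime S (fun t => ψ (ω t)) = walkHit ω := by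
    rw [← hitTime_Iic_zero_eq_walkHit h0 hstep, ← hS]
    rfl
  unfold stopPayoff
  rw [hhit]
  split_ifs with h
  · rfl
  · simp only [apply_walkHit_toNat_eq_zero h]

end HittingTimes

lemma abs_walkDisc_le_one {β : ℝ} (hβ : 0 ≤ β) (s : ℕ) (ω : ℕ → ℤ) : |walkDisc β s ω| ≤ 1 := by
  unfold walkDisc
  split_ifs
  · simp
  · have : 0 ≤ β * ((walkHit ω).toNat + s) := by positivity
    rw [abs_of_nonneg (by positivity), div_le_one (by linarith)]
    linarith

lemma alphaWalk_le_one (PrY : Kernel ℤ (ℕ → ℤ)) [IsMarkovKernel PrY] {β : ℝ} (hβ : 0 ≤ β)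
    (n : ℤ) : alphaWalk PrY β n ≤ 1 := by
  have h := norm_integral_le_of_norm_le_const (μ := PrY n)
    (Eventually.of_forall fun ω => (Real.norm_eq_abs _).trans_le (abs_walkDisc_le_one hβ 0 ω))
  simp only [probReal_univ, mul_one, Real.norm_eq_abs] at h
  exact (le_abs_self _).trans h

lemma pi_Iio_succ {α : ℕ → Type*} (n : ℕ) (A : ∀ i, Set (α i)) :
    (Iio (n + 1)).pi A = (Iio n).pi A ∩ {ω | ω n ∈ A n} := by
  rw [← Order.succ_eq_add_one, Order.Iio_succ_eq_insert, insert_pi, inter_comm]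
  rfl

/-- The law of a Markov chain with kernel `Q` started at `x`. The Markov property is only asked
for rectangles: they determine the law, and pointwise maps of paths pull them back to
rectangles. -/
structure IsMarkovChainMeasure {𝕏 : Type*} [MeasurableSpace 𝕏] (μ : Measure (ℕ → 𝕏))
    (Q : Kernel 𝕏 𝕏) (x : 𝕏) : Prop where
  start : μ {ω | ω 0 = x} = 1
  markov : ∀ (n : ℕ) (A : ℕ → Set 𝕏), (∀ i, MeasurableSet (A i)) → ∀ C : Set 𝕏,
    MeasurableSet C →
      μ ((Iio (n + 1)).pi A ∩ {ω | ω (n + 1) ∈ C}) = ∫⁻ ω in (Iio (n + 1)).pi A, Q (ω n) C ∂μ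

section MarkovChainMeasure

variable {𝕏 : Type*} [MeasurableSpace 𝕏] {μ : Measure (ℕ → 𝕏)} {Q : Kernel 𝕏 𝕏} {x : 𝕏}

lemma measurableSet_pi_Iio {n : ℕ} {A : ℕ → Set 𝕏} (hA : ∀ i, MeasurableSet (A i)) :
    MeasurableSet ((Iio n).pi A) :=
  .pi (to_countable _) fun i _ => hA i

lemma measurableSet_pathSigma_pi_Iio {n : ℕ} {A : ℕ → Set 𝕏} (hA : ∀ i, MeasurableSet (A i)) :
    MeasurableSet[pathSigma 𝕏 n] ((Iio (n + 1)).pi A) := by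
  rw [pi_def]
  refine .biInter (to_countable _) fun i hi => ?_
  have hle : MeasurableSpace.comap (fun ω : ℕ → 𝕏 => ω i) ‹_› ≤ pathSigma 𝕏 n :=
    le_iSup₂ (f := fun i (_ : i ∈ Finset.range (n + 1)) =>
      MeasurableSpace.comap (fun ω : ℕ → 𝕏 => ω i) ‹_›) i (Finset.mem_range.mpr hi)
  exact hle _ ⟨A i, hA i, rfl⟩

lemma IsMarkovChainLaw.isMarkovChainMeasure {Pr : Kernel 𝕏 (ℕ → 𝕏)}
    (h : IsMarkovChainLaw Pr Q) (x : 𝕏) : IsMarkovChainMeasure (Pr x) Q x where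
  start := h.start x
  markov n _A hA := h.markov x n _ (measurableSet_pathSigma_pi_Iio hA)

namespace IsMarkovChainMeasure

lemma ae_eval_zero [MeasurableSingletonClass 𝕏] [IsProbabilityMeasure μ]
    (hμ : IsMarkovChainMeasure μ Q x) : ∀ᵐ ω ∂μ, ω 0 = x := by
  have hm : MeasurableSet {ω : ℕ → 𝕏 | ω 0 = x} :=
    (measurableSet_singleton x).preimage (measurable_pi_apply 0)
  rw [ae_iff_measure_eq hm.nullMeasurableSet, hμ.start, measure_univ]

lemma map {𝕐 : Type*} [MeasurableSpace 𝕐] {ν : Measure (ℕ → 𝕐)} [IsProbabilityMeasure ν]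
    {Q' : Kernel 𝕐 𝕐} {y : 𝕐} (hν : IsMarkovChainMeasure ν Q' y) {ψ : 𝕐 → 𝕏}
    (hψ : Measurable ψ) (hQ : ∀ z, (Q' z).map ψ = Q (ψ z)) :
    IsMarkovChainMeasure (ν.map fun ω t => ψ (ω t)) Q (ψ y) := by
  have hφ : Measurable fun (ω : ℕ → 𝕐) t => ψ (ω t) := by fun_prop
  have : IsProbabilityMeasure (ν.map fun ω t => ψ (ω t)) :=
    Measure.isProbabilityMeasure_map hφ.aemeasurable
  refine ⟨le_antisymm prob_le_one ?_, fun n A hA C hC => ?_⟩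
  · calc (1 : ℝ≥0∞) = ν {ω | ω 0 = y} := hν.start.symm
      _ ≤ ν ((fun ω t => ψ (ω t)) ⁻¹' {ω | ω 0 = ψ y}) :=
          measure_mono fun ω (hω : ω 0 = y) => show ψ (ω 0) = ψ y by rw [hω]
      _ ≤ _ := Measure.le_map_apply hφ.aemeasurable _
  have hψA : ∀ i, MeasurableSet (ψ ⁻¹' A i) := fun i => hψ (hA i)
  have hR : MeasurableSet ((Iio (n + 1)).pi A ∩ {ω : ℕ → 𝕏 | ω (n + 1) ∈ C}) :=
    (measurableSet_pi_Iio hA).inter (measurable_pi_apply _ hC)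
  have hF : Measurable fun ω : ℕ → 𝕏 => Q (ω n) C :=
    (Q.measurable_coe hC).comp (measurable_pi_apply n)
  rw [Measure.map_apply hφ hR, setLIntegral_map (measurableSet_pi_Iio hA) hF hφ]
  simp_rw [← hQ, Measure.map_apply hψ hC]
  exact hν.markov n _ hψA _ (hψ hC)

end IsMarkovChainMeasure

end MarkovChainMeasure

section TwoPointKernel

variable {𝕏 : Type*} [MeasurableSpace 𝕏] {μ : Measure (ℕ → 𝕏)} {Q : Kernel 𝕏 𝕏} {x : 𝕏}
  {a b : ℝ≥0∞} {g h : 𝕏 → 𝕏}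

namespace IsMarkovChainMeasure

lemma measure_pi_Iio_inter_eval_succ (hμ : IsMarkovChainMeasure μ Q x) (hg : Measurable g)
    (hh : Measurable h) (hQ : ∀ z, Q z = a • Measure.dirac (g z) + b • Measure.dirac (h z)) (n : ℕ)
    {A : ℕ → Set 𝕏} (hA : ∀ i, MeasurableSet (A i)) {C : Set 𝕏} (hC : MeasurableSet C) :
    μ ((Iio (n + 1)).pi A ∩ {ω | ω (n + 1) ∈ C})
      = a * μ ((Iio n).pi A ∩ {ω | ω n ∈ A n ∩ g ⁻¹' C})
        + b * μ ((Iio n).pi A ∩ {ω | ω n ∈ A n ∩ h ⁻¹' C}) := by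
  have hev : ∀ {D : Set 𝕏}, MeasurableSet D → MeasurableSet {ω : ℕ → 𝕏 | ω n ∈ D} :=
    fun hD => hD.preimage (measurable_pi_apply n)
  have hset : ∀ D : Set 𝕏, {ω : ℕ → 𝕏 | ω n ∈ D} ∩ (Iio (n + 1)).pi A
      = (Iio n).pi A ∩ {ω | ω n ∈ A n ∩ D} := fun D => by
    rw [pi_Iio_succ]
    ext ω
    simp only [mem_inter_iff, mem_ofPred_eq]
    tauto
  have hQC : ∀ ω : ℕ → 𝕏, Q (ω n) C = a * {ω : ℕ → 𝕏 | ω n ∈ g ⁻¹' C}.indicator 1 ω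
      + b * {ω : ℕ → 𝕏 | ω n ∈ h ⁻¹' C}.indicator 1 ω := fun ω => by
    simp only [hQ, Measure.add_apply, Measure.smul_apply, Measure.dirac_apply' _ hC, smul_eq_mul]
    rfl
  have hgC := hev (hg hC)
  have hhC := hev (hh hC)
  simp_rw [hμ.markov n A hA C hC, hQC]
  rw [lintegral_add_left ((measurable_one.indicator hgC).const_mul a),
    lintegral_const_mul _ (measurable_one.indicator hgC),
    lintegral_const_mul _ (measurable_one.indicator hhC), lintegral_indicator_one hgC,
    lintegral_indicator_one hhC, Measure.restrict_apply hgC, Measure.restrict_apply hhC,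
    hset, hset]

lemma eq_of_twoPoint [MeasurableSingletonClass 𝕏] {ν : Measure (ℕ → 𝕏)} [IsProbabilityMeasure μ]
    [IsProbabilityMeasure ν] (hμ : IsMarkovChainMeasure μ Q x) (hν : IsMarkovChainMeasure ν Q x)
    (hg : Measurable g) (hh : Measurable h)
    (hQ : ∀ z, Q z = a • Measure.dirac (g z) + b • Measure.dirac (h z)) : μ = ν := by
  have hcyl : ∀ n (A : ℕ → Set 𝕏), (∀ i, MeasurableSet (A i)) → ∀ C, MeasurableSet C →
      μ ((Iio n).pi A ∩ {ω | ω n ∈ C}) = ν ((Iio n).pi A ∩ {ω | ω n ∈ C}) := by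
    intro n
    induction n with
    | zero =>
      intro A _ C _
      have hstart : ∀ ρ : Measure (ℕ → 𝕏), IsProbabilityMeasure ρ → IsMarkovChainMeasure ρ Q x →
          ρ ((Iio 0).pi A ∩ {ω | ω 0 ∈ C}) = ρ {_ω | x ∈ C} := fun ρ _ hρ =>
        measure_congr (hρ.ae_eval_zero.mono fun ω hω => by
          change (ω ∈ (Iio 0).pi A ∩ {ω | ω 0 ∈ C}) = (ω ∈ {_ω : ℕ → 𝕏 | x ∈ C})
          simp [hω])
      rw [hstart μ ‹_› hμ, hstart ν ‹_› hν]
      by_cases hxC : x ∈ C <;> simp [hxC]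
    | succ n ih =>
      intro A hA C hC
      rw [hμ.measure_pi_Iio_inter_eval_succ hg hh hQ n hA hC,
        hν.measure_pi_Iio_inter_eval_succ hg hh hQ n hA hC,
        ih A hA (A n ∩ g ⁻¹' C) ((hA n).inter (hg hC)),
        ih A hA (A n ∩ h ⁻¹' C) ((hA n).inter (hh hC))]
  refine ext_of_generate_finite _ generateFrom_squareCylinders.symm
    (isPiSystem_squareCylinders (fun _ => MeasurableSpace.isPiSystem_measurableSet) fun _ => .univ)
    ?_ (by simp)
  rintro _ ⟨s, t, ht, rfl⟩
  obtain ⟨n, hn⟩ := s.exists_nat_subset_range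
  classical
  have hrect : (s : Set ℕ).pi t
      = (Iio n).pi (fun i => if i ∈ s then t i else univ) ∩ {ω | ω n ∈ univ} := by
    ext ω
    refine ⟨fun hω => ⟨fun i _ => ?_, trivial⟩, fun hω i hi => ?_⟩
    · dsimp only
      split_ifs with hi
      exacts [hω i hi, trivial]
    · simpa [Finset.mem_coe.mp hi] using hω.1 i (Finset.mem_range.mp (hn hi))
  rw [hrect]
  refine hcyl n _ (fun i => ?_) _ .univ
  split_ifs
  exacts [ht i trivial, .univ]

lemma ae_succ_eq_or_eq [Countable 𝕏] [MeasurableSingletonClass 𝕏]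
    (hμ : IsMarkovChainMeasure μ Q x) (hg : Measurable g) (hh : Measurable h)
    (hQ : ∀ z, Q z = a • Measure.dirac (g z) + b • Measure.dirac (h z)) :
    ∀ᵐ ω ∂μ, ∀ t, ω (t + 1) = g (ω t) ∨ ω (t + 1) = h (ω t) := by
  classical
  refine ae_all_iff.mpr fun t => ?_
  let A : 𝕏 → ℕ → Set 𝕏 := fun z i => if i = t then {z} else univ
  have hA : ∀ z i, MeasurableSet (A z i) := fun z i => by
    simp only [A]
    split_ifs
    exacts [measurableSet_singleton z, .univ]
  have hnull : ∀ z, μ ((Iio (t + 1)).pi (A z) ∩ {ω | ω (t + 1) ∈ ({g z, h z} : Set 𝕏)ᶜ}) = 0 :=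
    fun z => by
      rw [hμ.measure_pi_Iio_inter_eval_succ hg hh hQ t (hA z) (to_countable _).measurableSet]
      simp [A]
  refine measure_mono_null (fun ω hω => ?_) (measure_iUnion_null hnull)
  refine mem_iUnion.mpr ⟨ω t, fun i hi => ?_, ?_⟩
  · simp only [A]
    split_ifs with hit
    exacts [hit ▸ rfl, trivial]
  · simpa [not_or] using hω

end IsMarkovChainMeasure

end TwoPointKernel

section Binomial

variable {u p y : ℝ} {Q : Kernel ℝ ℝ} {QY : Kernel ℤ ℤ}

lemma countable_binGrid (u : ℝ) : (binGrid u).Countable :=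
  (countable_range fun i : ℤ => u ^ i).mono fun _ ⟨i, hi⟩ => mem_range.mpr ⟨i, hi.symm⟩

lemma measurable_binomialPath (u y : ℝ) : Measurable fun (ω : ℕ → ℤ) t => y * u ^ ω t :=
  measurable_pi_lambda _ fun t =>
    (measurable_from_top (f := fun m : ℤ => y * u ^ m)).comp (measurable_pi_apply t)

lemma preimage_zpow_Ioc_inter_binGrid (hu : 1 < u) (hy : y ∈ binGrid u) (hy0 : 0 < y) :
    (fun m : ℤ => y * u ^ m) ⁻¹' (Ioc 0 y ∩ binGrid u) = Iic 0 := by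
  obtain ⟨j, rfl⟩ := hy
  ext m
  have hpos : 0 < u ^ m := zpow_pos (by linarith) m
  simp only [mem_preimage, mem_inter_iff, mem_Ioc, mem_Iic]
  refine ⟨fun ⟨⟨_, hle⟩, _⟩ => ?_, fun hm => ⟨⟨by positivity, ?_⟩, ⟨j + m, ?_⟩⟩⟩
  · exact (zpow_le_one_iff_right₀ hu).mp (le_of_mul_le_mul_left (by simpa using hle) hy0)
  · exact mul_le_of_le_one_right hy0.le (zpow_le_one_of_nonpos₀ hu.le hm)
  · rw [zpow_add₀ (by positivity)]

lemma map_walkKernel_eq_binomialKernel (hu : u ≠ 0)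
    (hQ : ∀ x : ℝ, Q x = ENNReal.ofReal p • Measure.dirac (u * x)
      + ENNReal.ofReal (1 - p) • Measure.dirac (x / u))
    (hQY : ∀ n : ℤ, QY n = ENNReal.ofReal p • Measure.dirac (n + 1)
      + ENNReal.ofReal (1 - p) • Measure.dirac (n - 1)) (z : ℤ) :
    (QY z).map (fun m : ℤ => y * u ^ m) = Q (y * u ^ z) := by
  rw [hQY, hQ, Measure.map_add _ _ measurable_from_top, Measure.map_smul, Measure.map_smul,
    Measure.map_dirac' measurable_from_top, Measure.map_dirac' measurable_from_top,
    zpow_add_one₀ hu, zpow_sub_one₀ hu]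
  congr 3 <;> ring

lemma binomial_law_eq_map_walk (hu : 1 < u) (Pr : Kernel ℝ (ℕ → ℝ)) [IsMarkovKernel Pr]
    (hchain : IsMarkovChainLaw Pr Q)
    (hQ : ∀ x : ℝ, Q x = ENNReal.ofReal p • Measure.dirac (u * x)
      + ENNReal.ofReal (1 - p) • Measure.dirac (x / u))
    (PrY : Kernel ℤ (ℕ → ℤ)) [IsMarkovKernel PrY] (hwalk : IsMarkovChainLaw PrY QY)
    (hQY : ∀ n : ℤ, QY n = ENNReal.ofReal p • Measure.dirac (n + 1)
      + ENNReal.ofReal (1 - p) • Measure.dirac (n - 1)) :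
    Pr (u * y) = (PrY 1).map fun ω t => y * u ^ ω t := by
  have hu0 : u ≠ 0 := by positivity
  have : IsProbabilityMeasure ((PrY 1).map fun ω t => y * u ^ ω t) :=
    Measure.isProbabilityMeasure_map (measurable_binomialPath u y).aemeasurable
  have hmap := (hwalk.isMarkovChainMeasure 1).map measurable_from_top
    (map_walkKernel_eq_binomialKernel (y := y) hu0 hQ hQY)
  rw [zpow_one, mul_comm] at hmap
  exact (hchain.isMarkovChainMeasure (u * y)).eq_of_twoPoint hmap (measurable_const_mul u)
    (measurable_div_const u) hQ

lemma valJ_binomial (hu : 1 < u) {β : ℝ} {f : ℝ → ℝ} (hf : Measurable f)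
    (hy : y ∈ binGrid u) (hy0 : 0 < y) (Pr : Kernel ℝ (ℕ → ℝ)) [IsMarkovKernel Pr]
    (hchain : IsMarkovChainLaw Pr Q)
    (hQ : ∀ x : ℝ, Q x = ENNReal.ofReal p • Measure.dirac (u * x)
      + ENNReal.ofReal (1 - p) • Measure.dirac (x / u))
    (PrY : Kernel ℤ (ℕ → ℤ)) [IsMarkovKernel PrY] (hwalk : IsMarkovChainLaw PrY QY)
    (hQY : ∀ n : ℤ, QY n = ENNReal.ofReal p • Measure.dirac (n + 1)
      + ENNReal.ofReal (1 - p) • Measure.dirac (n - 1)) :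
    valJ Pr (binDisc β) f (Ioc 0 y ∩ binGrid u) (u * y) = f y * alphaWalk PrY β 1 := by
  have hS : MeasurableSet (Ioc 0 y ∩ binGrid u) :=
    measurableSet_Ioc.inter (countable_binGrid u).measurableSet
  have hY := hwalk.isMarkovChainMeasure 1
  have hpaths : ∀ᵐ ω ∂PrY 1, stopPayoff (binDisc β) f (Ioc 0 y ∩ binGrid u)
      (fun t => y * u ^ ω t) = f y * walkDisc β 0 ω := by
    filter_upwards [hY.ae_eval_zero, hY.ae_succ_eq_or_eq (measurable_from_top (f := (· + 1)))
      (measurable_from_top (f := (· - 1))) hQY] with ω h0 hstep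
    rw [stopPayoff_comp_walk (preimage_zpow_Ioc_inter_binGrid hu hy hy0) (by omega)
      fun t => by rcases hstep t with h | h <;> omega]
    unfold walkDisc binDisc
    split_ifs <;> simp [mul_comm]
  rw [valJ, binomial_law_eq_map_walk hu Pr hchain hQ PrY hwalk hQY,
    integral_map (measurable_binomialPath u y).aemeasurable
      (measurable_stopPayoff _ hf hS).aestronglyMeasurable,
    integral_congr_ae hpaths, integral_const_mul, alphaWalk]

end Binomial

theorem binomial_equilibrium_lower_bound_general
    (u p β K : ℝ) (hu : 1 < u) (hβ : 0 < β)
    (Pr : Kernel ℝ (ℕ → ℝ)) [IsMarkovKernel Pr] (Q : Kernel ℝ ℝ)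
    (hchain : IsMarkovChainLaw Pr Q)
    (hQ : ∀ x : ℝ, Q x = ENNReal.ofReal p • Measure.dirac (u * x)
      + ENNReal.ofReal (1 - p) • Measure.dirac (x / u))
    (PrY : Kernel ℤ (ℕ → ℤ)) [IsMarkovKernel PrY] (QY : Kernel ℤ ℤ)
    (hwalk : IsMarkovChainLaw PrY QY)
    (hQY : ∀ n : ℤ, QY n = ENNReal.ofReal p • Measure.dirac (n + 1)
      + ENNReal.ofReal (1 - p) • Measure.dirac (n - 1))
    (y : ℝ) (hy_mem : y ∈ binGrid u) (hy_pos : 0 < y) (hyK : y < K)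
    (hS : ΘBin Pr u β K (Set.Ioc 0 y ∩ binGrid u) = Set.Ioc 0 y ∩ binGrid u) :
    ((1 - alphaWalk PrY β 1) / (u - alphaWalk PrY β 1)) * K < y := by
  have huy_grid : u * y ∈ binGrid u := by
    obtain ⟨j, rfl⟩ := hy_mem
    exact ⟨j + 1, by rw [zpow_add_one₀ (by positivity), mul_comm]⟩
  have huy_notMem : u * y ∉ Ioc 0 y ∩ binGrid u := fun h => by nlinarith [h.1.2]
  have hJ : binPay K (u * y) < (K - y) * alphaWalk PrY β 1 := by
    rw [← hS] at huy_notMem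
    have hpay : binPay K y = K - y := max_eq_left (by linarith)
    rw [← hpay, ← valJ_binomial hu (by unfold binPay; fun_prop) hy_mem hy_pos Pr hchain hQ PrY
      hwalk hQY]
    exact not_le.mp fun hle => huy_notMem ⟨huy_grid, hle⟩
  have hpay_uy : K - u * y ≤ binPay K (u * y) := le_max_left _ _
  have hα := alphaWalk_le_one PrY hβ.le 1
  rw [div_mul_eq_mul_div, div_lt_iff₀ (by linarith)]
  linarith

/-- In the binomial model, if `S = (0,y] ∩ 𝕏` is an equilibrium with `y ∈ S ∩ (0,K)`,
then `y > L·K` with `L = (1 − α₁) / (u − α₁)`. -/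
theorem binomial_equilibrium_lower_bound
    (u p β K : ℝ) (hu : 1 < u) (hp_lb : 1 / (u + 1) ≤ p) (hp_ub : p < 1)
    (hβ : 0 < β) (hK : 0 < K)
    (Pr : Kernel ℝ (ℕ → ℝ)) [IsMarkovKernel Pr] (Q : Kernel ℝ ℝ) [IsMarkovKernel Q]
    (hchain : IsMarkovChainLaw Pr Q)
    (hQ : ∀ x : ℝ, Q x = ENNReal.ofReal p • Measure.dirac (u * x)
      + ENNReal.ofReal (1 - p) • Measure.dirac (x / u))
    (PrY : Kernel ℤ (ℕ → ℤ)) [IsMarkovKernel PrY] (QY : Kernel ℤ ℤ) [IsMarkovKernel QY]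
    (hwalk : IsMarkovChainLaw PrY QY)
    (hQY : ∀ n : ℤ, QY n = ENNReal.ofReal p • Measure.dirac (n + 1)
      + ENNReal.ofReal (1 - p) • Measure.dirac (n - 1))
    (y : ℝ) (hy_mem : y ∈ binGrid u) (hy_pos : 0 < y) (hyK : y < K)
    (hS : ΘBin Pr u β K (Set.Ioc 0 y ∩ binGrid u) = Set.Ioc 0 y ∩ binGrid u) :
    ((1 - alphaWalk PrY β 1) / (u - alphaWalk PrY β 1)) * K < y :=
  binomial_equilibrium_lower_bound_general u p β K hu hβ Pr Q hchain hQ PrY QY hwalk hQY y hy_mem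
    hy_pos hyK hS

end
end

section
/- Let Y be the random walk on ℤ with i.i.d. steps equal to +1 with probability p and −1 with probability 1−p (0 < p < 1), let ξ := inf{t ≥ 0 : Y_t = 0}, and for β > 0 and n ∈ ℕ set α_n := E^n[1/(1+βξ)], where E^n denotes expectation for the walk started at Y_0 = n and 1/(1+β·∞) := 0. Then α_n ≥ (α₁)^n for all n ∈ ℕ, n ≥ 1. -/
open MeasureTheory ProbabilityTheory Set Filter Topology
open scoped ENNReal ENat

noncomputable section

/-!
Started at `n + 1 ≥ 1`, the walk cannot jump down by more than one step, so it passes through `n`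
before reaching `0`; let `τ` be that passage time. On `{τ = t}` one has `ξ = t + ξ ∘ θ_t`, and
`1 / (1 + β (t + s)) ≥ 1 / (1 + β t) · 1 / (1 + β s)`, so the Markov property at the fixed time `t`
gives `α_{n+1} ≥ ∑_t E^{n+1}[1 / (1 + β t); τ = t] · α_n`. By translation invariance the sum is
`α_1`, whence `α_{n+1} ≥ α_n α_1` and the claim follows by induction.

The Markov property at fixed times (and translation invariance of the laws) is obtained from the
one-step property in `IsMarkovChainLaw` by computing both sides on cylinder sets.
-/

section PathSpace

variable {𝕏 : Type*}

lemma finset_pi_eq_Iio_pi (s : Finset ℕ) (A : ℕ → Set 𝕏) :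
    (s : Set ℕ).pi A = (Iio (s.sup id + 1)).pi (fun i => if i ∈ s then A i else univ) := by
  ext ω
  simp only [Set.mem_pi, Finset.mem_coe, mem_Iio]
  refine ⟨fun h i _ => ?_, fun h i hi => ?_⟩
  · split_ifs with hi
    exacts [h i hi, mem_univ _]
  · simpa [hi] using h i (Nat.lt_succ_of_le (Finset.le_sup (f := id) hi))

def pathShift (m : ℕ) (ω : ℕ → 𝕏) : ℕ → 𝕏 := fun i => ω (m + i)

lemma pathShift_zero : pathShift (𝕏 := 𝕏) 0 = id := by
  funext ω i
  simp [pathShift]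

lemma pathShift_preimage_Iio_succ_pi (m k : ℕ) (A : ℕ → Set 𝕏) :
    pathShift m ⁻¹' (Iio (k + 1)).pi A
      = {ω | ω m ∈ A 0} ∩ pathShift (m + 1) ⁻¹' (Iio k).pi (fun i => A (i + 1)) := by
  ext ω
  simp only [mem_preimage, Set.mem_pi, mem_Iio, Nat.forall_lt_succ_left, pathShift, mem_inter_iff,
    mem_ofPred_eq, add_zero, add_right_comm m 1, ← add_assoc]

variable [MeasurableSpace 𝕏]

lemma measurable_pathShift (m : ℕ) : Measurable (pathShift (𝕏 := 𝕏) m) :=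
  measurable_pi_lambda _ fun i => measurable_pi_apply (m + i)

lemma measurable_pathSigma_apply {s t : ℕ} (hst : s ≤ t) :
    Measurable[pathSigma 𝕏 t] fun ω : ℕ → 𝕏 => ω s :=
  measurable_cylinderEvent_apply (X := fun _ : ℕ => 𝕏) (by simpa [Nat.lt_succ_iff] using hst)

lemma pathSigma_le (t : ℕ) : pathSigma 𝕏 t ≤ MeasurableSpace.pi :=
  cylinderEvents_le_pi

lemma pathSigma_mono {s t : ℕ} (hst : s ≤ t) : pathSigma 𝕏 s ≤ pathSigma 𝕏 t :=
  cylinderEvents_mono (X := fun _ : ℕ => 𝕏) (by simpa using Nat.succ_le_succ hst)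

lemma measure_ext_of_Iio_pi {μ ν : Measure (ℕ → 𝕏)} [IsFiniteMeasure μ]
    (h : ∀ k (A : ℕ → Set 𝕏), (∀ i, MeasurableSet (A i)) →
      μ ((Iio k).pi A) = ν ((Iio k).pi A)) : μ = ν := by
  refine ext_of_generate_finite _ generateFrom_squareCylinders.symm
    (isPiSystem_squareCylinders (fun _ => MeasurableSpace.isPiSystem_measurableSet)
      fun _ => MeasurableSet.univ) ?_ (by simpa using h 0 (fun _ => univ) fun _ => .univ)
  rintro _ ⟨s, A, hA, rfl⟩
  rw [finset_pi_eq_Iio_pi]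
  refine h _ _ fun i => ?_
  split_ifs
  exacts [hA i (mem_univ i), .univ]

end PathSpace

lemma IsMarkovChainLaw.ae_start {𝕏 : Type*} [MeasurableSpace 𝕏] [MeasurableSingletonClass 𝕏]
    {Pr : Kernel 𝕏 (ℕ → 𝕏)} [IsMarkovKernel Pr] {Q : Kernel 𝕏 𝕏} (hPr : IsMarkovChainLaw Pr Q)
    (x : 𝕏) : ∀ᵐ ω ∂Pr x, ω 0 = x :=
  have hS : MeasurableSet ((fun ω : ℕ → 𝕏 => ω 0) ⁻¹' {x}) :=
    measurable_pi_apply 0 (measurableSet_singleton x)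
  (ae_iff_measure_eq (p := fun ω : ℕ → 𝕏 => ω 0 = x) hS.nullMeasurableSet).2
    (by rw [hPr.start, measure_univ])

section MarkovChain

variable {𝕏 : Type*} [MeasurableSpace 𝕏] [MeasurableSingletonClass 𝕏] [Countable 𝕏]

/-- `pathProb Q k A y` is the probability that the chain with kernel `Q` started at `y`
satisfies `X i ∈ A i` for all `i < k`. -/
def pathProb (Q : Kernel 𝕏 𝕏) : ℕ → (ℕ → Set 𝕏) → 𝕏 → ℝ≥0∞
  | 0, _, _ => 1
  | k + 1, A, y => (A 0).indicator (fun y => ∫⁻ z, pathProb Q k (fun i => A (i + 1)) z ∂Q y) y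

lemma pathProb_preimage {Q : Kernel 𝕏 𝕏} {φ : 𝕏 → 𝕏} (hφ : ∀ y, (Q y).map φ = Q (φ y))
    (k : ℕ) (A : ℕ → Set 𝕏) (y : 𝕏) :
    pathProb Q k (fun i => φ ⁻¹' A i) y = pathProb Q k A (φ y) := by
  induction k generalizing A y with
  | zero => rfl
  | succ k ih =>
    simp only [pathProb, ih]
    rw [← indicator_comp_right φ]
    congr 1
    funext y
    simp only [Function.comp_apply, ← hφ,
      lintegral_map Measurable.of_discrete Measurable.of_discrete]

lemma measurable_comp_path (φ : 𝕏 → 𝕏) : Measurable fun ω : ℕ → 𝕏 => φ ∘ ω :=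
  measurable_pi_lambda _ fun i => (Measurable.of_discrete (f := φ)).comp (measurable_pi_apply i)

namespace IsMarkovChainLaw

variable {Pr : Kernel 𝕏 (ℕ → 𝕏)} {Q : Kernel 𝕏 𝕏}

lemma setLIntegral_comp_succ (hPr : IsMarkovChainLaw Pr Q) (x : 𝕏) {m : ℕ}
    {B : Set (ℕ → 𝕏)} (hB : MeasurableSet[pathSigma 𝕏 m] B) (f : 𝕏 → ℝ≥0∞) :
    ∫⁻ ω in B, f (ω (m + 1)) ∂Pr x = ∫⁻ ω in B, ∫⁻ z, f z ∂Q (ω m) ∂Pr x := by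
  have hQ : ∀ z, Measurable fun ω : ℕ → 𝕏 => Q (ω m) {z} := fun z =>
    (Q.measurable_coe (measurableSet_singleton z)).comp (measurable_pi_apply m)
  calc ∫⁻ ω in B, f (ω (m + 1)) ∂Pr x
      = ∑' z, f z * ((Pr x).restrict B).map (fun ω => ω (m + 1)) {z} := by
        rw [← lintegral_countable', lintegral_map Measurable.of_discrete (measurable_pi_apply _)]
    _ = ∑' z, ∫⁻ ω in B, f z * Q (ω m) {z} ∂Pr x := by
        refine tsum_congr fun z => ?_
        rw [Measure.map_apply (measurable_pi_apply _) (measurableSet_singleton z),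
          Measure.restrict_apply (measurable_pi_apply _ (measurableSet_singleton z)), inter_comm,
          lintegral_const_mul _ (hQ z)]
        exact congrArg (f z * ·) (hPr.markov x m B hB {z} (measurableSet_singleton z))
    _ = ∫⁻ ω in B, ∑' z, f z * Q (ω m) {z} ∂Pr x :=
        (lintegral_tsum fun z => (measurable_const.mul (hQ z)).aemeasurable).symm
    _ = ∫⁻ ω in B, ∫⁻ z, f z ∂Q (ω m) ∂Pr x := by
        simp only [lintegral_countable']

lemma measure_inter_pathShift_preimage (hPr : IsMarkovChainLaw Pr Q) (x : 𝕏) (k : ℕ) :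
    ∀ {m : ℕ} {B : Set (ℕ → 𝕏)}, MeasurableSet[pathSigma 𝕏 m] B → ∀ A : ℕ → Set 𝕏,
      Pr x (B ∩ pathShift m ⁻¹' (Iio k).pi A) = ∫⁻ ω in B, pathProb Q k A (ω m) ∂Pr x := by
  induction k with
  | zero =>
    intro m B hB A
    simp [pathProb]
  | succ k ih =>
    intro m B hB A
    have hS : MeasurableSet {ω : ℕ → 𝕏 | ω m ∈ A 0} := measurable_pi_apply m .of_discrete
    have hBS : MeasurableSet[pathSigma 𝕏 m] (B ∩ {ω | ω m ∈ A 0}) :=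
      hB.inter (measurable_pathSigma_apply le_rfl .of_discrete)
    rw [pathShift_preimage_Iio_succ_pi, ← inter_assoc, ih (pathSigma_mono m.le_succ _ hBS),
      hPr.setLIntegral_comp_succ x hBS, inter_comm B, ← Measure.restrict_restrict hS,
      ← lintegral_indicator hS]
    rfl

lemma ae_forall_succ (hPr : IsMarkovChainLaw Pr Q) (x : 𝕏) {R : 𝕏 → 𝕏 → Prop}
    (hR : ∀ y, ∀ᵐ z ∂Q y, R y z) : ∀ᵐ ω ∂Pr x, ∀ t, R (ω t) (ω (t + 1)) := by
  refine ae_all_iff.2 fun t => measure_mono_null (t := ⋃ y, {ω | ω t ∈ ({y} : Set 𝕏)} ∩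
    {ω | ω (t + 1) ∈ {z | ¬R y z}}) (fun ω hω => mem_iUnion.2 ⟨ω t, rfl, hω⟩) ?_
  refine measure_iUnion_null fun y => ?_
  rw [hPr.markov x t {ω | ω t ∈ ({y} : Set 𝕏)}
    (measurable_pathSigma_apply le_rfl (measurableSet_singleton y)) _ .of_discrete,
    ← nonpos_iff_eq_zero]
  calc ∫⁻ ω in {ω | ω t ∈ ({y} : Set 𝕏)}, Q (ω t) {z | ¬R y z} ∂Pr x
      = ∫⁻ _ in {ω | ω t ∈ ({y} : Set 𝕏)}, 0 ∂Pr x :=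
        setLIntegral_congr_fun (measurable_pi_apply t (measurableSet_singleton y))
          fun ω (hω : ω t = y) => by rw [hω, ← ae_iff.1 (hR y)]
    _ ≤ 0 := by simp

variable [IsMarkovKernel Pr]

lemma measure_Iio_pi (hPr : IsMarkovChainLaw Pr Q) (x : 𝕏) (k : ℕ) (A : ℕ → Set 𝕏) :
    Pr x ((Iio k).pi A) = pathProb Q k A x := by
  have h := hPr.measure_inter_pathShift_preimage x k (MeasurableSet.univ (m := pathSigma 𝕏 0)) A
  rw [univ_inter, pathShift_zero, preimage_id, Measure.restrict_univ,
    lintegral_congr_ae ((hPr.ae_start x).mono fun ω hω => by rw [hω]), lintegral_const,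
    measure_univ, mul_one] at h
  exact h

lemma map_pathShift_restrict (hPr : IsMarkovChainLaw Pr Q) (x : 𝕏) {m : ℕ}
    {B : Set (ℕ → 𝕏)} (hB : MeasurableSet[pathSigma 𝕏 m] B) :
    ((Pr x).restrict B).map (pathShift m) = ((Pr x).restrict B).bind fun ω => Pr (ω m) := by
  have hPrm : Measurable fun ω : ℕ → 𝕏 => Pr (ω m) := Pr.measurable.comp (measurable_pi_apply m)
  refine measure_ext_of_Iio_pi fun k A hA => ?_
  have hbox : MeasurableSet ((Iio k).pi A) := .pi (to_countable _) fun i _ => hA i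
  rw [Measure.map_apply (measurable_pathShift m) hbox,
    Measure.restrict_apply (measurable_pathShift m hbox), inter_comm,
    hPr.measure_inter_pathShift_preimage x k hB, Measure.bind_apply hbox hPrm.aemeasurable]
  simp only [hPr.measure_Iio_pi]

lemma setLIntegral_comp_pathShift (hPr : IsMarkovChainLaw Pr Q) (x : 𝕏) {m : ℕ}
    {B : Set (ℕ → 𝕏)} (hB : MeasurableSet[pathSigma 𝕏 m] B) {g : (ℕ → 𝕏) → ℝ≥0∞}
    (hg : Measurable g) :
    ∫⁻ ω in B, g (pathShift m ω) ∂Pr x = ∫⁻ ω in B, ∫⁻ ψ, g ψ ∂Pr (ω m) ∂Pr x := by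
  have hPrm : Measurable fun ω : ℕ → 𝕏 => Pr (ω m) := Pr.measurable.comp (measurable_pi_apply m)
  rw [← lintegral_map hg (measurable_pathShift m), hPr.map_pathShift_restrict x hB,
    Measure.lintegral_bind hPrm.aemeasurable hg.aemeasurable]

lemma map_comp_eq (hPr : IsMarkovChainLaw Pr Q) {φ : 𝕏 → 𝕏} (hφ : ∀ y, (Q y).map φ = Q (φ y))
    (x : 𝕏) : (Pr x).map (fun ω => φ ∘ ω) = Pr (φ x) := by
  refine measure_ext_of_Iio_pi fun k A hA => ?_
  rw [Measure.map_apply (measurable_comp_path φ) (.pi (to_countable _) fun i _ => hA i)]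
  exact (hPr.measure_Iio_pi x k _).trans ((pathProb_preimage hφ k A x).trans
    (hPr.measure_Iio_pi (φ x) k A).symm)

end IsMarkovChainLaw

end MarkovChain

section HittingTime

lemma walkHit_eq_coe_iff {ω : ℕ → ℤ} {t : ℕ} :
    walkHit ω = t ↔ ω t = 0 ∧ ∀ s < t, ω s ≠ 0 := by
  constructor
  · intro h
    have hne : {n : ℕ∞ | ∃ t : ℕ, n = t ∧ ω t = 0}.Nonempty := by
      by_contra he
      simp [walkHit, not_nonempty_iff_eq_empty.1 he] at h
    obtain ⟨s, hs, h0⟩ := csInf_mem hne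
    obtain rfl : t = s := by exact_mod_cast h.symm.trans hs
    refine ⟨h0, fun r hr h0r => ?_⟩
    have : walkHit ω ≤ r := sInf_le ⟨r, rfl, h0r⟩
    rw [h] at this
    exact absurd hr (not_lt.2 (by exact_mod_cast this))
  · rintro ⟨h0, hlt⟩
    refine IsLeast.csInf_eq ⟨⟨t, rfl, h0⟩, ?_⟩
    rintro _ ⟨s, rfl, hs⟩
    exact Nat.cast_le.2 (not_lt.1 fun h => hlt s h hs)

lemma walkHit_eq_top_iff {ω : ℕ → ℤ} : walkHit ω = ⊤ ↔ ∀ t, ω t ≠ 0 := by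
  refine sInf_eq_top.trans ⟨fun h t ht => ENat.natCast_ne_top t (h t ⟨t, rfl, ht⟩), ?_⟩
  rintro h _ ⟨t, rfl, ht⟩
  exact absurd ht (h t)

lemma walkHit_eq_add_pathShift {ω : ℕ → ℤ} {t : ℕ} (h : ∀ s < t, ω s ≠ 0) :
    walkHit ω = t + walkHit (pathShift t ω) := by
  cases hs : walkHit (pathShift t ω) using ENat.recTopCoe with
  | top =>
    rw [walkHit_eq_top_iff] at hs
    rw [add_top, walkHit_eq_top_iff]
    intro r
    rcases lt_or_ge r t with hrt | hrt
    · exact h r hrt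
    · simpa [pathShift, Nat.add_sub_cancel' hrt] using hs (r - t)
  | coe s =>
    rw [walkHit_eq_coe_iff] at hs
    rw [← Nat.cast_add, walkHit_eq_coe_iff]
    refine ⟨hs.1, fun r hr => ?_⟩
    rcases lt_or_ge r t with hrt | hrt
    · exact h r hrt
    · simpa [pathShift, Nat.add_sub_cancel' hrt] using hs.2 (r - t) (by omega)

lemma measurableSet_walkHit_comp_eq (φ : ℤ → ℤ) (t : ℕ) :
    MeasurableSet[pathSigma ℤ t] {ω | walkHit (φ ∘ ω) = t} := by
  have h : {ω | walkHit (φ ∘ ω) = t} = (fun ω => ω t) ⁻¹' (φ ⁻¹' {0}) ∩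
      ⋂ s, ⋂ (_ : s < t), (fun ω => ω s) ⁻¹' (φ ⁻¹' {0})ᶜ := by
    ext ω
    simp [walkHit_eq_coe_iff]
  rw [h]
  exact (measurable_pathSigma_apply le_rfl .of_discrete).inter
    (.iInter fun s => .iInter fun hs => measurable_pathSigma_apply (le_of_lt hs) .of_discrete)

lemma measurable_walkHit : Measurable walkHit := by
  refine measurable_to_countable' fun h => ?_
  cases h using ENat.recTopCoe with
  | top =>
    have h : walkHit ⁻¹' {⊤} = ⋂ t, (fun ω => ω t) ⁻¹' {0}ᶜ := by
      ext ω
      simp [walkHit_eq_top_iff]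
    rw [h]
    exact .iInter fun t => measurable_pi_apply t .of_discrete
  | coe t => exact pathSigma_le t _ (measurableSet_walkHit_comp_eq id t)

lemma lt_apply_of_forall_ne {ω : ℕ → ℤ} {a : ℤ} {t : ℕ} (h0 : a < ω 0)
    (hstep : ∀ s, ω s - 1 ≤ ω (s + 1)) (hne : ∀ s < t, ω s ≠ a) : ∀ s < t, a < ω s := by
  intro s hs
  induction s with
  | zero => exact h0
  | succ s ih =>
    have hlt := ih (by omega)
    have hle := hstep s
    have hne' := hne (s + 1) hs
    omega

end HittingTime

section Discount

lemma one_div_one_add_mul_mul_le {β s t : ℝ} (hβ : 0 ≤ β) (hs : 0 ≤ s) (ht : 0 ≤ t) :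
    1 / (1 + β * s) * (1 / (1 + β * t)) ≤ 1 / (1 + β * (s + t)) := by
  rw [div_mul_div_comm, one_mul, div_le_div_iff₀ (by positivity) (by positivity)]
  nlinarith [mul_nonneg (mul_nonneg hβ hβ) (mul_nonneg hs ht)]

lemma walkDisc_nonneg {β : ℝ} (hβ : 0 ≤ β) (s : ℕ) (ω : ℕ → ℤ) : 0 ≤ walkDisc β s ω := by
  unfold walkDisc
  split_ifs <;> positivity

lemma walkDisc_le_one {β : ℝ} (hβ : 0 ≤ β) (s : ℕ) (ω : ℕ → ℤ) : walkDisc β s ω ≤ 1 := by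
  unfold walkDisc
  split_ifs
  · exact zero_le_one
  · exact div_le_one_of_le₀ (le_add_of_nonneg_right (by positivity)) (by positivity)

lemma measurable_walkDisc (β : ℝ) (s : ℕ) : Measurable (walkDisc β s) :=
  (Measurable.of_discrete (f := fun h : ℕ∞ => if h = ⊤ then (0 : ℝ) else
    1 / (1 + β * (h.toNat + s)))).comp measurable_walkHit

lemma walkDisc_eq_pathShift {β : ℝ} {ω : ℕ → ℤ} {t : ℕ} (h : ∀ s < t, ω s ≠ 0) :
    walkDisc β 0 ω = walkDisc β t (pathShift t ω) := by
  unfold walkDisc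
  rw [walkHit_eq_add_pathShift h]
  cases walkHit (pathShift t ω) using ENat.recTopCoe with
  | top => simp
  | coe s =>
    simp only [← Nat.cast_add, ENat.natCast_ne_top, if_false, ENat.toNat_natCast]
    push_cast
    ring_nf

lemma ofReal_mul_walkDisc_le {β : ℝ} (hβ : 0 ≤ β) (t : ℕ) (ω : ℕ → ℤ) :
    ENNReal.ofReal (1 / (1 + β * t)) * ENNReal.ofReal (walkDisc β 0 ω)
      ≤ ENNReal.ofReal (walkDisc β t ω) := by
  rw [← ENNReal.ofReal_mul (by positivity)]
  refine ENNReal.ofReal_le_ofReal ?_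
  unfold walkDisc
  split_ifs
  · simp
  · simpa [add_comm] using one_div_one_add_mul_mul_le hβ (Nat.cast_nonneg t)
      (Nat.cast_nonneg (walkHit ω).toNat)

lemma ofReal_walkDisc_eq_tsum (β : ℝ) (ω : ℕ → ℤ) :
    ENNReal.ofReal (walkDisc β 0 ω)
      = ∑' t : ℕ, {ω | walkHit ω = t}.indicator (fun _ => ENNReal.ofReal (1 / (1 + β * t))) ω := by
  cases h : walkHit ω using ENat.recTopCoe with
  | top => simp [walkDisc, h]
  | coe s =>
    rw [tsum_eq_single s fun t hts => indicator_of_notMem (by simpa [h] using hts.symm) _]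
    simp [walkDisc, h]

end Discount

section WalkKernel

variable {p : ℝ} {Q : Kernel ℤ ℤ}

lemma map_sub_eq_of_eq_walk (hQ : ∀ n : ℤ, Q n = ENNReal.ofReal p • Measure.dirac (n + 1)
    + ENNReal.ofReal (1 - p) • Measure.dirac (n - 1)) (a y : ℤ) :
    (Q y).map (· - a) = Q (y - a) := by
  rw [hQ, hQ, Measure.map_add _ _ .of_discrete, Measure.map_smul, Measure.map_smul,
    Measure.map_dirac, Measure.map_dirac, sub_right_comm, add_sub_right_comm]

lemma ae_sub_one_le_of_eq_walk (hQ : ∀ n : ℤ, Q n = ENNReal.ofReal p • Measure.dirac (n + 1)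
    + ENNReal.ofReal (1 - p) • Measure.dirac (n - 1)) (y : ℤ) :
    ∀ᵐ z ∂Q y, y - 1 ≤ z := by
  rw [hQ, ae_add_measure_iff]
  exact ⟨Measure.ae_smul_measure ((ae_dirac_iff .of_discrete).2 (by omega)) _,
    Measure.ae_smul_measure ((ae_dirac_iff .of_discrete).2 le_rfl) _⟩

end WalkKernel

def lalphaWalk (Pr : Kernel ℤ (ℕ → ℤ)) (β : ℝ) (x : ℤ) : ℝ≥0∞ :=
  ∫⁻ ω, ENNReal.ofReal (walkDisc β 0 ω) ∂Pr x

lemma alphaWalk_eq_toReal {Pr : Kernel ℤ (ℕ → ℤ)} {β : ℝ} (hβ : 0 ≤ β) (x : ℤ) :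
    alphaWalk Pr β x = (lalphaWalk Pr β x).toReal :=
  integral_eq_lintegral_of_nonneg_ae (.of_forall (walkDisc_nonneg hβ 0))
    (measurable_walkDisc β 0).aestronglyMeasurable

section Supermultiplicativity

variable {Pr : Kernel ℤ (ℕ → ℤ)} [IsMarkovKernel Pr] {Q : Kernel ℤ ℤ} {β : ℝ}

lemma lalphaWalk_one_eq_tsum (hPr : IsMarkovChainLaw Pr Q)
    (htrans : ∀ a y, (Q y).map (· - a) = Q (y - a)) (a : ℤ) :
    lalphaWalk Pr β 1 = ∑' t : ℕ, ENNReal.ofReal (1 / (1 + β * t))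
      * Pr (a + 1) {ω | walkHit ((· - a) ∘ ω) = t} := by
  have hE : ∀ t : ℕ, MeasurableSet {ω | walkHit ((· - a) ∘ ω) = t} := fun t =>
    pathSigma_le t _ (measurableSet_walkHit_comp_eq _ t)
  calc lalphaWalk Pr β 1
      = ∫⁻ ω, ENNReal.ofReal (walkDisc β 0 ω) ∂(Pr (a + 1)).map fun ω => (· - a) ∘ ω := by
        rw [hPr.map_comp_eq (htrans a), add_sub_cancel_left, lalphaWalk]
    _ = ∫⁻ ω, ∑' t : ℕ, {ω | walkHit ((· - a) ∘ ω) = t}.indicator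
          (fun _ => ENNReal.ofReal (1 / (1 + β * t))) ω ∂Pr (a + 1) := by
        rw [lintegral_map (measurable_walkDisc β 0).ennreal_ofReal (measurable_comp_path _)]
        simp only [ofReal_walkDisc_eq_tsum]
        rfl
    _ = _ := by
        rw [lintegral_tsum fun t => (measurable_const.indicator (hE t)).aemeasurable]
        simp only [lintegral_indicator_const (hE _)]

lemma ofReal_mul_measure_mul_le (hPr : IsMarkovChainLaw Pr Q)
    (hskip : ∀ y, ∀ᵐ z ∂Q y, y - 1 ≤ z) (hβ : 0 ≤ β) (n t : ℕ) :
    ENNReal.ofReal (1 / (1 + β * t)) * Pr (n + 1) {ω | walkHit ((· - (n : ℤ)) ∘ ω) = t}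
        * lalphaWalk Pr β n
      ≤ ∫⁻ ω in {ω | walkHit ((· - (n : ℤ)) ∘ ω) = t}, ENNReal.ofReal (walkDisc β 0 ω)
          ∂Pr (n + 1) := by
  set E := {ω : ℕ → ℤ | walkHit ((· - (n : ℤ)) ∘ ω) = t}
  have hE : MeasurableSet[pathSigma ℤ t] E := measurableSet_walkHit_comp_eq _ t
  have hEm : MeasurableSet E := pathSigma_le t _ hE
  have hmem : ∀ ω ∈ E, ω t = n ∧ ∀ s < t, ω s ≠ n := fun ω hω => by
    simpa [E, walkHit_eq_coe_iff, sub_eq_zero] using hω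
  -- before reaching `n`, a path started at `n + 1` cannot reach `0`, so `ξ = t + ξ ∘ θ_t` on `E`
  have hshift : ∀ᵐ ω ∂Pr (n + 1), ω ∈ E → walkDisc β 0 ω = walkDisc β t (pathShift t ω) := by
    filter_upwards [hPr.ae_start _, hPr.ae_forall_succ _ hskip] with ω h0 hstep hω
    refine walkDisc_eq_pathShift fun s hs => ?_
    have := lt_apply_of_forall_ne (by omega) hstep (hmem ω hω).2 s hs
    omega
  calc ENNReal.ofReal (1 / (1 + β * t)) * Pr (n + 1) E * lalphaWalk Pr β n
      = Pr (n + 1) E * (ENNReal.ofReal (1 / (1 + β * t)) * lalphaWalk Pr β n) := by ring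
    _ ≤ Pr (n + 1) E * ∫⁻ ψ, ENNReal.ofReal (walkDisc β t ψ) ∂Pr n := by
        gcongr
        exact (lintegral_const_mul_le _ _).trans
          (lintegral_mono fun ψ => ofReal_mul_walkDisc_le hβ t ψ)
    _ = ∫⁻ ω in E, ∫⁻ ψ, ENNReal.ofReal (walkDisc β t ψ) ∂Pr (ω t) ∂Pr (n + 1) := by
        rw [setLIntegral_congr_fun hEm fun ω hω => by rw [(hmem ω hω).1], setLIntegral_const,
          mul_comm]
    _ = ∫⁻ ω in E, ENNReal.ofReal (walkDisc β t (pathShift t ω)) ∂Pr (n + 1) :=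
        (hPr.setLIntegral_comp_pathShift _ hE
          (measurable_walkDisc β t).ennreal_ofReal).symm
    _ = ∫⁻ ω in E, ENNReal.ofReal (walkDisc β 0 ω) ∂Pr (n + 1) :=
        setLIntegral_congr_fun_ae hEm (hshift.mono fun ω h hω => by rw [h hω])

lemma lalphaWalk_mul_le (hPr : IsMarkovChainLaw Pr Q)
    (htrans : ∀ a y, (Q y).map (· - a) = Q (y - a)) (hskip : ∀ y, ∀ᵐ z ∂Q y, y - 1 ≤ z)
    (hβ : 0 ≤ β) (n : ℕ) :
    lalphaWalk Pr β n * lalphaWalk Pr β 1 ≤ lalphaWalk Pr β (n + 1) := by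
  set E : ℕ → Set (ℕ → ℤ) := fun t => {ω | walkHit ((· - (n : ℤ)) ∘ ω) = t}
  have hE : ∀ t, MeasurableSet (E t) := fun t =>
    pathSigma_le t _ (measurableSet_walkHit_comp_eq _ t)
  have hdisj : Pairwise (Function.onFun Disjoint E) := fun s t hst =>
    Set.disjoint_left.2 fun ω hs ht => hst (by exact_mod_cast (hs : _ = _).symm.trans ht)
  rw [lalphaWalk_one_eq_tsum hPr htrans n, ← ENNReal.tsum_mul_left]
  calc ∑' t : ℕ, lalphaWalk Pr β n * (ENNReal.ofReal (1 / (1 + β * t)) * Pr (n + 1) (E t))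
      ≤ ∑' t, ∫⁻ ω in E t, ENNReal.ofReal (walkDisc β 0 ω) ∂Pr (n + 1) :=
        ENNReal.tsum_le_tsum fun t =>
          (mul_comm _ _).trans_le (ofReal_mul_measure_mul_le hPr hskip hβ n t)
    _ = ∫⁻ ω in ⋃ t, E t, ENNReal.ofReal (walkDisc β 0 ω) ∂Pr (n + 1) :=
        (lintegral_iUnion hE hdisj _).symm
    _ ≤ lalphaWalk Pr β (n + 1) := setLIntegral_le_lintegral _ _

lemma lalphaWalk_one_pow_le (hPr : IsMarkovChainLaw Pr Q)
    (htrans : ∀ a y, (Q y).map (· - a) = Q (y - a)) (hskip : ∀ y, ∀ᵐ z ∂Q y, y - 1 ≤ z)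
    (hβ : 0 ≤ β) {n : ℕ} (hn : 1 ≤ n) : lalphaWalk Pr β 1 ^ n ≤ lalphaWalk Pr β n := by
  induction n, hn using Nat.le_induction with
  | base => simp
  | succ m _ ih =>
    calc lalphaWalk Pr β 1 ^ (m + 1) = lalphaWalk Pr β 1 ^ m * lalphaWalk Pr β 1 := pow_succ _ _
      _ ≤ lalphaWalk Pr β m * lalphaWalk Pr β 1 := by gcongr
      _ ≤ lalphaWalk Pr β (m + 1 : ℕ) := by
        exact_mod_cast lalphaWalk_mul_le hPr htrans hskip hβ m

lemma lalphaWalk_ne_top (hβ : 0 ≤ β) (x : ℤ) : lalphaWalk Pr β x ≠ ⊤ :=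
  ne_top_of_le_ne_top ENNReal.one_ne_top <| (lintegral_mono fun ω =>
    ENNReal.ofReal_le_one.2 (walkDisc_le_one hβ 0 ω)).trans_eq (by simp)

end Supermultiplicativity

theorem alphaWalk_pow_le_general
    (p β : ℝ) (hβ : 0 < β)
    (PrY : Kernel ℤ (ℕ → ℤ)) [IsMarkovKernel PrY] (QY : Kernel ℤ ℤ)
    (hwalk : IsMarkovChainLaw PrY QY)
    (hQY : ∀ n : ℤ, QY n = ENNReal.ofReal p • Measure.dirac (n + 1)
      + ENNReal.ofReal (1 - p) • Measure.dirac (n - 1))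
 :
    ∀ n : ℕ, 1 ≤ n → alphaWalk PrY β 1 ^ n ≤ alphaWalk PrY β (n : ℤ) := by
  intro n hn
  rw [alphaWalk_eq_toReal hβ.le, alphaWalk_eq_toReal hβ.le, ← ENNReal.toReal_pow]
  exact ENNReal.toReal_mono (lalphaWalk_ne_top hβ.le _) <| lalphaWalk_one_pow_le hwalk
    (map_sub_eq_of_eq_walk hQY) (ae_sub_one_le_of_eq_walk hQY) hβ.le hn

/-- For the random walk with upward probability `p`, the discounted hitting values
satisfy `α_n ≥ (α₁)ⁿ` for all `n ≥ 1`. -/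
theorem alphaWalk_pow_le
    (p β : ℝ) (hp0 : 0 < p) (hp1 : p < 1) (hβ : 0 < β)
    (PrY : Kernel ℤ (ℕ → ℤ)) [IsMarkovKernel PrY] (QY : Kernel ℤ ℤ) [IsMarkovKernel QY]
    (hwalk : IsMarkovChainLaw PrY QY)
    (hQY : ∀ n : ℤ, QY n = ENNReal.ofReal p • Measure.dirac (n + 1)
      + ENNReal.ofReal (1 - p) • Measure.dirac (n - 1))
 :
    ∀ n : ℕ, 1 ≤ n → alphaWalk PrY β 1 ^ n ≤ alphaWalk PrY β (n : ℤ) :=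
  alphaWalk_pow_le_general p β hβ PrY QY hwalk hQY

end
end
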